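/- arXiv:0904.3137 — 2 statements merged into one kernel-verified Lean document; each statement's English description precedes it below -/
import Mathlib

section
/- Every closed category (in the sense where γ is required to be a bijection, axiom CC5) is isomorphic, as a closed category, to a closed category in the sense of Eilenberg and Kelly, i.e. one equipped with a functor C : W → Set satisfying CC0 (C ∘ W̲(-,-) = W(-,-)) and CC5' (C i_{W̲(X,X)} sends 1_X to j_X). -/
open CategoryTheory Opposite

universe v u

/-- The data of a closed category in the sense of Eilenberg–Kelly / Street / Laplaza:
an internal hom functor, a unit object, and the transformations `i`, `j`, `L`. -/
structure ClosedStruct (C : Type u) [Category.{v} C] where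
  ihom : Cᵒᵖ × C ⥤ C
  unit : C
  i : ∀ X : C, X ≅ ihom.obj (op unit, X)
  j : ∀ X : C, unit ⟶ ihom.obj (op X, X)
  L : ∀ X Y Z : C,
    ihom.obj (op Y, Z) ⟶ ihom.obj (op (ihom.obj (op X, Y)), ihom.obj (op X, Z))

namespace ClosedStruct

variable {C : Type u} [Category.{v} C] (S : ClosedStruct C)

/-- Internal hom object. -/
def h (X Y : C) : C := S.ihom.obj (op X, Y)

/-- Covariant action `C(1,g)` of the internal hom functor. -/
def mapR (X : C) {Y Z : C} (g : Y ⟶ Z) : S.h X Y ⟶ S.h X Z :=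
  S.ihom.map (𝟙 (op X), g)

/-- Contravariant action `C(f,1)` of the internal hom functor. -/
def mapL {X Y : C} (f : X ⟶ Y) (Z : C) : S.h Y Z ⟶ S.h X Z :=
  S.ihom.map (f.op, 𝟙 Z)

/-- The map `γ : C(X,Y) → C(1, C(X,Y))`, `f ↦ j_X ≫ C(1,f)`. -/
def gamma {X Y : C} (f : X ⟶ Y) : S.unit ⟶ S.h X Y := S.j X ≫ S.mapR X f

end ClosedStruct

/-- The axioms making a `ClosedStruct` into a closed category:
naturality/dinaturality of `i`, `j`, `L` and the axioms CC1–CC5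
(CC5 : `γ` is a bijection). -/
structure IsClosedCat {C : Type u} [Category.{v} C] (S : ClosedStruct C) : Prop where
  i_nat : ∀ {X Y : C} (f : X ⟶ Y),
    f ≫ (S.i Y).hom = (S.i X).hom ≫ S.mapR S.unit f
  j_dinat : ∀ {X Y : C} (f : X ⟶ Y),
    S.j X ≫ S.mapR X f = S.j Y ≫ S.mapL f Y
  L_nat : ∀ (X : C) {Y Y' Z Z' : C} (f : Y' ⟶ Y) (g : Z ⟶ Z'),
    S.ihom.map (f.op, g) ≫ S.L X Y' Z'
      = S.L X Y Z ≫ S.ihom.map (Y := (op (S.h X Y'), S.h X Z')) ((S.mapR X f).op, S.mapR X g)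
  L_dinat : ∀ {X X' : C} (f : X ⟶ X') (Y Z : C),
    S.L X Y Z ≫ S.mapL (S.mapL f Y) (S.h X Z)
      = S.L X' Y Z ≫ S.mapR (S.h X' Y) (S.mapL f Z)
  cc1 : ∀ X Y : C, S.j Y ≫ S.L X Y Y = S.j (S.h X Y)
  cc2 : ∀ X Y : C, S.L X X Y ≫ S.mapL (S.j X) (S.h X Y) = (S.i (S.h X Y)).hom
  cc3 : ∀ X Y U V : C,
    S.L Y U V ≫ S.mapR (S.h Y U) (S.L X Y V)
      = S.L X U V ≫ S.L (S.h X Y) (S.h X U) (S.h X V)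
          ≫ S.mapL (S.L X Y U) (S.h (S.h X Y) (S.h X V))
  cc4 : ∀ Y Z : C,
    S.L S.unit Y Z ≫ S.mapL (S.i Y).hom (S.h S.unit Z) = S.mapR Y (S.i Z).hom
  cc5 : ∀ X Y : C, Function.Bijective (fun f : X ⟶ Y => S.gamma f)

universe v' u'

/-- The data of a closed functor `(φ, φ̂, φ⁰)` between closed categories. -/
structure ClosedFunctorData {C : Type u} [Category.{v} C] {D : Type u'} [Category.{v'} D]
    (S : ClosedStruct C) (T : ClosedStruct D) : Type (max u v u' v') where
  F : C ⥤ D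
  Fhat : ∀ X Y : C, F.obj (S.h X Y) ⟶ T.h (F.obj X) (F.obj Y)
  F0 : T.unit ⟶ F.obj S.unit

/-- The axioms of a closed functor: naturality of `φ̂` and CF1–CF3. -/
structure IsClosedFunctor {C : Type u} [Category.{v} C] {D : Type u'} [Category.{v'} D]
    (S : ClosedStruct C) (T : ClosedStruct D) (Φ : ClosedFunctorData S T) : Prop where
  Fhat_nat : ∀ {X X' Y Y' : C} (f : X' ⟶ X) (g : Y ⟶ Y'),
    Φ.F.map (S.ihom.map (f.op, g)) ≫ Φ.Fhat X' Y'
      = Φ.Fhat X Y ≫ T.ihom.map ((Φ.F.map f).op, Φ.F.map g)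
  cf1 : ∀ X : C, Φ.F0 ≫ Φ.F.map (S.j X) ≫ Φ.Fhat X X = T.j (Φ.F.obj X)
  cf2 : ∀ X : C,
    Φ.F.map (S.i X).hom ≫ Φ.Fhat S.unit X ≫ T.mapL Φ.F0 (Φ.F.obj X)
      = (T.i (Φ.F.obj X)).hom
  cf3 : ∀ X Y Z : C,
    Φ.F.map (S.L X Y Z) ≫ Φ.Fhat (S.h X Y) (S.h X Z)
        ≫ T.mapR (Φ.F.obj (S.h X Y)) (Φ.Fhat X Z)
      = Φ.Fhat Y Z ≫ T.L (Φ.F.obj X) (Φ.F.obj Y) (Φ.F.obj Z)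
        ≫ T.mapL (Φ.Fhat X Y) (T.h (Φ.F.obj X) (Φ.F.obj Z))

/-- The identity closed functor. -/
def ClosedFunctorData.idCF {C : Type u} [Category.{v} C] (S : ClosedStruct C) :
    ClosedFunctorData S S where
  F := 𝟭 C
  Fhat := fun _ _ => 𝟙 _
  F0 := 𝟙 _

/-- Composition of closed functors. -/
def ClosedFunctorData.comp {C : Type u} [Category.{v} C] {D : Type u'} [Category.{v'} D]
    {E : Type u'} [Category.{v'} E] {S : ClosedStruct C} {T : ClosedStruct D}
    {R : ClosedStruct E} (Φ : ClosedFunctorData S T) (Ψ : ClosedFunctorData T R) :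
    ClosedFunctorData S R where
  F := Φ.F ⋙ Ψ.F
  Fhat := fun X Y => Ψ.F.map (Φ.Fhat X Y) ≫ Ψ.Fhat (Φ.F.obj X) (Φ.F.obj Y)
  F0 := Ψ.F0 ≫ Ψ.F.map Φ.F0

/-!
Since `γ : C(X, Y) → C(I, [X, Y])` is a bijection (CC5), one may replace every hom-set `C(X, Y)`
by `C(I, [X, Y])`, transporting composition, identities and the whole closed structure along `γ`.
The resulting closed category is isomorphic to the original one via the identity-on-objects
closed functors `γ` and `γ⁻¹`, and its hom-sets are, by construction, the values of
`C(I, -) : W ⥤ Set` on internal homs, which is CC0. Naturality of `γ` makes this an equality of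
functors, and CC5' reduces to `i_I = j_I`, which follows from CC1, CC2 and
injectivity of `γ`.
-/

-- `S.h X Y` must unfold to `S.ihom.obj (op X, Y)` when `simp` matches hom-types.
attribute [reducible] ClosedStruct.h

namespace ClosedStruct

variable {C : Type u} [Category.{v} C] (S : ClosedStruct C)

@[simp] theorem mapR_id (X Y : C) : S.mapR X (𝟙 Y) = 𝟙 (S.h X Y) :=
  S.ihom.map_id (op X, Y)

@[simp] theorem mapL_id (X Y : C) : S.mapL (𝟙 X) Y = 𝟙 (S.h X Y) :=
  S.ihom.map_id (op X, Y)

theorem gamma_id (X : C) : S.gamma (𝟙 X) = S.j X := by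
  simp [gamma]

end ClosedStruct

namespace IsClosedCat

variable {C : Type u} [Category.{v} C] {S : ClosedStruct C}

theorem gamma_comp_comp (hS : IsClosedCat S) {X' X Y Y' : C} (a : X' ⟶ X) (v : X ⟶ Y)
    (b : Y ⟶ Y') : S.gamma (a ≫ v ≫ b) = S.gamma v ≫ S.ihom.map (a.op, b) := by
  have hmap : S.mapL a X ≫ S.mapR X' (v ≫ b) = S.mapR X v ≫ S.ihom.map (a.op, b) := by
    simp only [ClosedStruct.mapL, ClosedStruct.mapR, ← Functor.map_comp, prod_comp]
    simp
  calc S.gamma (a ≫ v ≫ b) = (S.j X' ≫ S.mapR X' a) ≫ S.mapR X' (v ≫ b) := by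
        simp only [ClosedStruct.gamma, ClosedStruct.mapR, Category.assoc, ← Functor.map_comp,
          prod_comp, Category.comp_id]
    _ = S.j X ≫ S.mapL a X ≫ S.mapR X' (v ≫ b) := by
        rw [hS.j_dinat, Category.assoc]
    _ = S.gamma v ≫ S.ihom.map (a.op, b) := by
        rw [hmap, ClosedStruct.gamma, Category.assoc]

theorem i_unit_hom_eq_j (hS : IsClosedCat S) : (S.i S.unit).hom = S.j S.unit := by
  apply (hS.cc5 _ _).injective
  have h_i : S.mapR S.unit (S.i S.unit).hom = (S.i (S.h S.unit S.unit)).hom :=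
    ((cancel_epi (S.i S.unit).hom).mp (hS.i_nat (S.i S.unit).hom)).symm
  calc S.gamma (S.i S.unit).hom = S.j S.unit ≫ (S.i (S.h S.unit S.unit)).hom := by
        rw [ClosedStruct.gamma, h_i]
    _ = S.j (S.h S.unit S.unit) ≫ S.mapL (S.j S.unit) (S.h S.unit S.unit) := by
        rw [← hS.cc2, ← hS.cc1, Category.assoc]
    _ = S.gamma (S.j S.unit) := (hS.j_dinat _).symm

theorem j_comp_i_hom (hS : IsClosedCat S) (X : C) :
    S.j X ≫ (S.i (S.h X X)).hom = S.gamma (S.j X) := by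
  rw [hS.i_nat, hS.i_unit_hom_eq_j, ClosedStruct.gamma]

noncomputable def gammaEquiv (hS : IsClosedCat S) (X Y : C) : (X ⟶ Y) ≃ (S.unit ⟶ S.h X Y) :=
  Equiv.ofBijective (fun f => S.gamma f) (hS.cc5 X Y)

theorem gammaEquiv_apply (hS : IsClosedCat S) {X Y : C} (f : X ⟶ Y) :
    hS.gammaEquiv X Y f = S.gamma f := rfl

theorem gammaEquiv_comp_symm_comp (hS : IsClosedCat S) {X' X Y Y' : C} (a : X' ⟶ X)
    (u : S.unit ⟶ S.h X Y) (b : Y ⟶ Y') :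
    hS.gammaEquiv X' Y' (a ≫ (hS.gammaEquiv X Y).symm u ≫ b) = u ≫ S.ihom.map (a.op, b) := by
  rw [gammaEquiv_apply, hS.gamma_comp_comp, ← hS.gammaEquiv_apply, Equiv.apply_symm_apply]

end IsClosedCat

/-- The objects of `C` with hom-sets `H X Y`; composition is transported along `e`. -/
structure HomTransport {C : Type u} [Category.{v} C] {H : C → C → Type v}
    (e : ∀ X Y : C, (X ⟶ Y) ≃ H X Y) : Type u where
  obj : C

namespace HomTransport

variable {C : Type u} [Category.{v} C] {H : C → C → Type v}
  (e : ∀ X Y : C, (X ⟶ Y) ≃ H X Y)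

instance category : Category.{v} (HomTransport e) where
  Hom X Y := H X.obj Y.obj
  id X := e _ _ (𝟙 X.obj)
  comp f g := e _ _ ((e _ _).symm f ≫ (e _ _).symm g)
  id_comp _ := by simp
  comp_id _ := by simp
  assoc _ _ _ := by simp

theorem id_def (X : HomTransport e) : 𝟙 X = e X.obj X.obj (𝟙 X.obj) := rfl

theorem comp_def {X Y Z : HomTransport e} (f : X ⟶ Y) (g : Y ⟶ Z) :
    f ≫ g = e _ _ ((e _ _).symm f ≫ (e _ _).symm g) := rfl

@[simp] theorem apply_id (X : C) : e X X (𝟙 X) = 𝟙 (⟨X⟩ : HomTransport e) := rfl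

@[simp] theorem symm_id (X : HomTransport e) : (e X.obj X.obj).symm (𝟙 X) = 𝟙 X.obj :=
  (e _ _).symm_apply_apply _

@[simp] theorem symm_id_mk (X : C) : (e X X).symm (𝟙 (⟨X⟩ : HomTransport e)) = 𝟙 X :=
  symm_id e ⟨X⟩

def functor : C ⥤ HomTransport e where
  obj X := ⟨X⟩
  map f := e _ _ f
  map_id _ := rfl
  map_comp _ _ := by simp [comp_def]

def inverse : HomTransport e ⥤ C where
  obj X := X.obj
  map f := (e _ _).symm f
  map_id := symm_id e
  map_comp _ _ := by simp [comp_def]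

@[simp] theorem functor_obj (X : C) : (functor e).obj X = ⟨X⟩ := rfl

@[simp] theorem functor_map {X Y : C} (f : X ⟶ Y) : (functor e).map f = e X Y f := rfl

@[simp] theorem inverse_obj (X : HomTransport e) : (inverse e).obj X = X.obj := rfl

@[simp] theorem inverse_map {X Y : HomTransport e} (f : X ⟶ Y) :
    (inverse e).map f = (e X.obj Y.obj).symm f := rfl

theorem functor_comp_inverse : functor e ⋙ inverse e = 𝟭 C :=
  CategoryTheory.Functor.hext (fun _ => rfl) (fun _ _ _ => heq_of_eq (by simp))

theorem inverse_comp_functor : inverse e ⋙ functor e = 𝟭 (HomTransport e) :=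
  CategoryTheory.Functor.hext (fun _ => rfl) (fun _ _ _ => heq_of_eq (by simp))

end HomTransport

theorem ClosedFunctorData.hext {C : Type u} [Category.{v} C] {D : Type u'} [Category.{v'} D]
    {S : ClosedStruct C} {T : ClosedStruct D} {Φ Ψ : ClosedFunctorData S T} (hF : Φ.F = Ψ.F)
    (hFhat : Φ.Fhat ≍ Ψ.Fhat) (hF0 : Φ.F0 ≍ Ψ.F0) : Φ = Ψ := by
  cases Φ; cases Ψ; cases hF; cases hFhat; cases hF0; rfl

namespace ClosedStruct

variable {C : Type u} [Category.{v} C] {H : C → C → Type v}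
  (S : ClosedStruct C) (e : ∀ X Y : C, (X ⟶ Y) ≃ H X Y)

open HomTransport

def transport : ClosedStruct (HomTransport e) where
  ihom := ((inverse e).op.prod (inverse e) ⋙ S.ihom) ⋙ functor e
  unit := ⟨S.unit⟩
  i X := (functor e).mapIso (S.i X.obj)
  j X := (functor e).map (S.j X.obj)
  L X Y Z := (functor e).map (S.L X.obj Y.obj Z.obj)

@[simp] theorem transport_unit : (S.transport e).unit = ⟨S.unit⟩ := rfl

@[simp] theorem transport_ihom_obj (p : (HomTransport e)ᵒᵖ × HomTransport e) :
    (S.transport e).ihom.obj p = ⟨S.h p.1.unop.obj p.2.obj⟩ := rfl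

@[simp] theorem transport_ihom_map {p q : (HomTransport e)ᵒᵖ × HomTransport e} (f : p ⟶ q) :
    (S.transport e).ihom.map f
      = e (S.h p.1.unop.obj p.2.obj) (S.h q.1.unop.obj q.2.obj)
          (S.ihom.map (((e _ _).symm f.1.unop).op, (e _ _).symm f.2)) := rfl

@[simp] theorem transport_i_hom (X : HomTransport e) :
    ((S.transport e).i X).hom = e X.obj (S.h S.unit X.obj) (S.i X.obj).hom := rfl

@[simp] theorem transport_j (X : HomTransport e) :
    (S.transport e).j X = e S.unit (S.h X.obj X.obj) (S.j X.obj) := rfl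

@[simp] theorem transport_L (X Y Z : HomTransport e) :
    (S.transport e).L X Y Z
      = e (S.h Y.obj Z.obj) (S.h (S.h X.obj Y.obj) (S.h X.obj Z.obj))
          (S.L X.obj Y.obj Z.obj) := rfl

@[simp] theorem transport_mapR (X : HomTransport e) {Y Z : HomTransport e} (g : Y ⟶ Z) :
    (S.transport e).mapR X g
      = e (S.h X.obj Y.obj) (S.h X.obj Z.obj) (S.mapR X.obj ((e _ _).symm g)) := by
  simp [mapR]

@[simp] theorem transport_mapL {X Y : HomTransport e} (f : X ⟶ Y) (Z : HomTransport e) :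
    (S.transport e).mapL f Z
      = e (S.h Y.obj Z.obj) (S.h X.obj Z.obj) (S.mapL ((e _ _).symm f) Z.obj) := by
  simp [mapL]

theorem transport_gamma {X Y : HomTransport e} (f : X ⟶ Y) :
    (S.transport e).gamma f = e S.unit (S.h X.obj Y.obj) (S.gamma ((e _ _).symm f)) := by
  simp [gamma, comp_def]

def toTransport : ClosedFunctorData S (S.transport e) where
  F := functor e
  Fhat _ _ := 𝟙 _
  F0 := 𝟙 _

def ofTransport : ClosedFunctorData (S.transport e) S where
  F := inverse e
  Fhat _ _ := 𝟙 _
  F0 := 𝟙 _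

theorem isClosedFunctor_toTransport : IsClosedFunctor S (S.transport e) (S.toTransport e) where
  Fhat_nat f g := by simp [toTransport]
  cf1 X := by simp [toTransport]
  cf2 X := by simp [toTransport]
  cf3 X Y Z := by simp [toTransport]

theorem isClosedFunctor_ofTransport : IsClosedFunctor (S.transport e) S (S.ofTransport e) where
  Fhat_nat f g := by simp [ofTransport]
  cf1 X := by simp [ofTransport]
  cf2 X := by simp [ofTransport]
  cf3 X Y Z := by simp [ofTransport]

theorem toTransport_comp_ofTransport :
    (S.toTransport e).comp (S.ofTransport e) = ClosedFunctorData.idCF S := by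
  refine ClosedFunctorData.hext (functor_comp_inverse e) (heq_of_eq ?_) (heq_of_eq ?_) <;>
    simp [ClosedFunctorData.comp, ClosedFunctorData.idCF, toTransport, ofTransport]

theorem ofTransport_comp_toTransport :
    (S.ofTransport e).comp (S.toTransport e) = ClosedFunctorData.idCF (S.transport e) := by
  refine ClosedFunctorData.hext (inverse_comp_functor e) (heq_of_eq ?_) (heq_of_eq ?_) <;>
    simp [ClosedFunctorData.comp, ClosedFunctorData.idCF, toTransport, ofTransport]

end ClosedStruct

namespace IsClosedCat

variable {C : Type u} [Category.{v} C] {H : C → C → Type v} {S : ClosedStruct C}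

open HomTransport

theorem transport (hS : IsClosedCat S) (e : ∀ X Y : C, (X ⟶ Y) ≃ H X Y) :
    IsClosedCat (S.transport e) where
  i_nat f := by simp [comp_def, hS.i_nat]
  j_dinat f := by simp [comp_def, hS.j_dinat]
  L_nat X Y Y' Z Z' f g := by simp [comp_def, hS.L_nat]
  L_dinat f Y Z := by simp [comp_def, hS.L_dinat]
  cc1 X Y := by simp [comp_def, hS.cc1]
  cc2 X Y := by simp [comp_def, hS.cc2]
  cc3 X Y U V := by simp [comp_def, hS.cc3]
  cc4 Y Z := by simp [comp_def, hS.cc4]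
  cc5 X Y := by
    simp only [ClosedStruct.transport_gamma]
    exact (e _ _).bijective.comp ((hS.cc5 _ _).comp (e _ _).symm.bijective)

noncomputable def underlying (hS : IsClosedCat S) : HomTransport hS.gammaEquiv ⥤ Type v :=
  inverse hS.gammaEquiv ⋙ coyoneda.obj (op S.unit)

theorem transport_ihom_comp_underlying (hS : IsClosedCat S) :
    (S.transport hS.gammaEquiv).ihom ⋙ hS.underlying = Functor.hom _ := by
  refine CategoryTheory.Functor.hext (fun _ => rfl) (fun p q f => heq_of_eq ?_)
  ext (u : S.unit ⟶ S.h p.1.unop.obj p.2.obj)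
  simp [underlying, comp_def, hS.gammaEquiv_comp_symm_comp]

theorem underlying_map_i_hom_id (hS : IsClosedCat S) (X : HomTransport hS.gammaEquiv) :
    hS.underlying.map ((S.transport hS.gammaEquiv).i ((S.transport hS.gammaEquiv).h X X)).hom
      (𝟙 X) = (S.transport hS.gammaEquiv).j X := by
  change hS.gammaEquiv X.obj X.obj (𝟙 X.obj) ≫ (hS.gammaEquiv (S.h X.obj X.obj)
    (S.h S.unit (S.h X.obj X.obj))).symm (hS.gammaEquiv _ _ (S.i (S.h X.obj X.obj)).hom)
      = hS.gammaEquiv S.unit (S.h X.obj X.obj) (S.j X.obj)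
  rw [Equiv.symm_apply_apply, gammaEquiv_apply, gammaEquiv_apply, S.gamma_id, hS.j_comp_i_hom]

end IsClosedCat

/-- Every closed category (in the sense where `γ` is required to
be a bijection, axiom CC5) is isomorphic, as a closed category, to a closed
category in the sense of Eilenberg and Kelly, i.e. one equipped with a functor
`U : W ⥤ Set` satisfying CC0 (`U ∘ W̲(-,-) = W(-,-)`) and CC5'
(`U i_{W̲(X,X)}` sends `1_X` to `j_X`). -/
theorem isoToEilenbergKelly {C : Type u} [Category.{v} C]
    (S : ClosedStruct C) (hS : IsClosedCat S) :
    ∃ (W : Type u) (_instW : Category.{v} W) (T : ClosedStruct W) (_hT : IsClosedCat T)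
      (U : W ⥤ Type v) (hCC0 : T.ihom ⋙ U = Functor.hom W),
      (∀ X : W,
        U.map (T.i (T.h X X)).hom
          (cast (congrArg (fun (Fc : Wᵒᵖ × W ⥤ Type v) => Fc.obj (op X, X)) hCC0).symm
            (𝟙 X))
        = cast (congrArg (fun (Fc : Wᵒᵖ × W ⥤ Type v) => Fc.obj (op T.unit, T.h X X))
            hCC0).symm (T.j X)) ∧
      ∃ (Φ : ClosedFunctorData S T) (Ψ : ClosedFunctorData T S),
        IsClosedFunctor S T Φ ∧ IsClosedFunctor T S Ψ ∧
        Φ.comp Ψ = ClosedFunctorData.idCF S ∧ Ψ.comp Φ = ClosedFunctorData.idCF T :=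
  ⟨HomTransport hS.gammaEquiv, inferInstance, S.transport hS.gammaEquiv, hS.transport _,
    hS.underlying, hS.transport_ihom_comp_underlying, fun X =>
      (congrArg _ (cast_eq _ _)).trans ((hS.underlying_map_i_hom_id X).trans (cast_eq _ _).symm),
    S.toTransport _, S.ofTransport _, S.isClosedFunctor_toTransport _,
    S.isClosedFunctor_ofTransport _, S.toTransport_comp_ofTransport _,
    S.ofTransport_comp_toTransport _⟩
end

section
/- Let C be a closed multicategory. The assignments Y ↦ C̲(X;Y) together with the morphisms L^X_{YZ} : C̲(Y;Z) → C̲(C̲(X;Y); C̲(X;Z)), uniquely determined by (1, L^X_{YZ})·ev = μ (composition of the C-category C̲), define a C-functor L^X : C̲ → C̲; in particular L^X preserves identities and composition. -/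
universe u v

/-- A family of multimorphisms `f_i : Xss_i → Ys_i` (with matching lengths),
used to express simultaneous composition in a multicategory. -/
inductive HomFam (Obj : Type u) (Hom : List Obj → Obj → Type v) :
    List (List Obj) → List Obj → Type (max u v)
  | nil : HomFam Obj Hom [] []
  | cons {Xs Y Xss Ys} : Hom Xs Y → HomFam Obj Hom Xss Ys →
      HomFam Obj Hom (Xs :: Xss) (Y :: Ys)

/-- A family of families of multimorphisms. -/
inductive FamFam (Obj : Type u) (Hom : List Obj → Obj → Type v) :
    List (List (List Obj)) → List (List Obj) → Type (max u v)
  | nil : FamFam Obj Hom [] []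
  | cons {Xss Ys Xsss Yss} : HomFam Obj Hom Xss Ys → FamFam Obj Hom Xsss Yss →
      FamFam Obj Hom (Xss :: Xsss) (Ys :: Yss)

variable {Obj : Type u} {Hom : List Obj → Obj → Type v}

/-- The family of identities on a list of objects. -/
def idFam (ident : ∀ X, Hom [X] X) : ∀ Ys : List Obj,
    HomFam Obj Hom (Ys.map fun y => [y]) Ys
  | [] => .nil
  | y :: ys => .cons (ident y) (idFam ident ys)

/-- Concatenation of families. -/
def appendFam : ∀ {A B C D}, HomFam Obj Hom A B → HomFam Obj Hom C D →
    HomFam Obj Hom (A ++ C) (B ++ D)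
  | _, _, _, _, .nil, t => t
  | _, _, _, _, .cons f fs, t => .cons f (appendFam fs t)

/-- Flattening a family of families. -/
def flattenFam : ∀ {Xsss Yss}, FamFam Obj Hom Xsss Yss →
    HomFam Obj Hom Xsss.flatten Yss.flatten
  | _, _, .nil => .nil
  | _, _, .cons fs fss => appendFam fs (flattenFam fss)

/-- Componentwise composition of a family of families with a family. -/
def zipComp
    (comp : ∀ {Xss Ys Z}, HomFam Obj Hom Xss Ys → Hom Ys Z → Hom Xss.flatten Z) :
    ∀ {Xsss Yss Zs}, FamFam Obj Hom Xsss Yss → HomFam Obj Hom Yss Zs →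
      HomFam Obj Hom (Xsss.map List.flatten) Zs
  | _, _, _, .nil, .nil => .nil
  | _, _, _, .cons fs fss, .cons g gs => .cons (comp fs g) (zipComp comp fss gs)

/-- A multicategory: objects, multimorphisms `X₁,…,Xₙ → Y`, identities and an
associative and unital simultaneous composition `(f₁,…,fₙ) · g`. -/
structure Multicategory : Type (max (u + 1) (v + 1)) where
  Obj : Type u
  Hom : List Obj → Obj → Type v
  ident : ∀ X : Obj, Hom [X] X
  comp : ∀ {Xss : List (List Obj)} {Ys : List Obj} {Z : Obj},
    HomFam Obj Hom Xss Ys → Hom Ys Z → Hom Xss.flatten Z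
  id_comp : ∀ {Ys Z} (g : Hom Ys Z), HEq (comp (idFam ident Ys) g) g
  comp_id : ∀ {Xs Y} (f : Hom Xs Y), HEq (comp (.cons f .nil) (ident Y)) f
  assoc : ∀ {Xsss Yss Zs Z} (fss : FamFam Obj Hom Xsss Yss)
    (gs : HomFam Obj Hom Yss Zs) (h : Hom Zs Z),
    HEq (comp (zipComp (fun fs g => comp fs g) fss gs) h)
        (comp (flattenFam fss) (comp gs h))

namespace Multicategory

variable (M : Multicategory.{u, v})

theorem map_singleton_flatten (l : List M.Obj) :
    (l.map fun x => [x]).flatten = l := by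
  induction l <;> simp_all

theorem sflat (Xs Ys : List M.Obj) :
    ((Xs.map fun x => [x]) ++ [Ys]).flatten = Xs ++ Ys := by
  induction Xs <;> simp_all

theorem sflat2 (Xs Γ : List M.Obj) :
    (Xs :: (Γ.map fun x => [x])).flatten = Xs ++ Γ := by
  simp [List.flatten_cons, map_singleton_flatten]

/-- `(1,…,1,f) · g` : plugging `f` into the last argument of `g`. -/
def plug {Xs Ys : List M.Obj} {H Z : M.Obj} (f : M.Hom Ys H)
    (g : M.Hom (Xs ++ [H]) Z) : M.Hom (Xs ++ Ys) Z :=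
  cast (congrArg (M.Hom · Z) (M.sflat Xs Ys))
    (M.comp (appendFam (idFam M.ident Xs) (.cons f .nil)) g)

/-- `(f,1,…,1) · g` : plugging `f` into the first argument of `g`. -/
def plugFirst {Xs Γ : List M.Obj} {Y Z : M.Obj} (f : M.Hom Xs Y)
    (g : M.Hom (Y :: Γ) Z) : M.Hom (Xs ++ Γ) Z :=
  cast (congrArg (M.Hom · Z) (M.sflat2 Xs Γ))
    (M.comp (.cons f (idFam M.ident Γ)) g)

/-- `(f) · h` : composing a multimorphism with a unary morphism. -/
def postcomp {Γ : List M.Obj} {Y Z : M.Obj} (f : M.Hom Γ Y) (h : M.Hom [Y] Z) :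
    M.Hom Γ Z :=
  cast (congrArg (M.Hom · Z) (by simp : ([Γ].flatten : List M.Obj) = Γ))
    (M.comp (.cons f .nil) h)

/-- Composition in the underlying category. -/
def comp1 {X Y Z : M.Obj} (f : M.Hom [X] Y) (g : M.Hom [Y] Z) : M.Hom [X] Z :=
  M.postcomp f g

/-- `(a, b) · g` : binary simultaneous composition. -/
def pair {As Bs : List M.Obj} {A' B' Cc : M.Obj} (a : M.Hom As A') (b : M.Hom Bs B')
    (g : M.Hom [A', B'] Cc) : M.Hom (As ++ Bs) Cc :=
  cast (congrArg (M.Hom · Cc) (by simp : ([As, Bs].flatten : List M.Obj) = As ++ Bs))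
    (M.comp (.cons a (.cons b .nil)) g)

/-- `(f₁,…,fₘ,1) · g` for a family of unary morphisms `fᵢ`. -/
def sideComp {As Bs : List M.Obj} (fs : HomFam M.Obj M.Hom (As.map fun a => [a]) Bs)
    {H Z : M.Obj} (g : M.Hom (Bs ++ [H]) Z) : M.Hom (As ++ [H]) Z :=
  cast (congrArg (M.Hom · Z) (M.sflat As [H]))
    (M.comp (appendFam fs (.cons (M.ident H) .nil)) g)

end Multicategory

/-- The image of a family of multimorphisms under a multifunctor. -/
def mapFam {M N : Multicategory.{u, v}} (obj : M.Obj → N.Obj)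
    (map : ∀ {Xs Y}, M.Hom Xs Y → N.Hom (Xs.map obj) (obj Y)) :
    ∀ {Xss Ys}, HomFam M.Obj M.Hom Xss Ys →
      HomFam N.Obj N.Hom (Xss.map (List.map obj)) (Ys.map obj)
  | _, _, .nil => .nil
  | _, _, .cons f fs => .cons (map f) (mapFam obj @map fs)

/-- A multifunctor between multicategories. -/
structure Multifunctor (M N : Multicategory.{u, v}) : Type (max u v) where
  obj : M.Obj → N.Obj
  map : ∀ {Xs Y}, M.Hom Xs Y → N.Hom (Xs.map obj) (obj Y)
  map_ident : ∀ X, map (M.ident X) = N.ident (obj X)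
  map_comp : ∀ {Xss Ys Z} (fs : HomFam M.Obj M.Hom Xss Ys) (g : M.Hom Ys Z),
    HEq (map (M.comp fs g)) (N.comp (mapFam obj @map fs) (map g))

/-- A closed multicategory : a multicategory together with internal hom objects
and evaluation morphisms such that `φ : f ↦ (1,…,1,f)·ev` is a bijection. -/
structure ClosedMulticategory extends Multicategory.{u, v} where
  ihom : List Obj → Obj → Obj
  ev : ∀ (Xs : List Obj) (Z : Obj), Hom (Xs ++ [ihom Xs Z]) Z
  closed : ∀ (Xs Ys : List Obj) (Z : Obj),
    Function.Bijective
      (fun f : Hom Ys (ihom Xs Z) => toMulticategory.plug f (ev Xs Z))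

namespace ClosedMulticategory

variable (C : ClosedMulticategory.{u, v})

/-- The inverse of the bijection `φ` : currying. -/
noncomputable def curry {Xs Ys : List C.Obj} {Z : C.Obj}
    (f : C.Hom (Xs ++ Ys) Z) : C.Hom Ys (C.ihom Xs Z) :=
  (Equiv.ofBijective _ (C.closed Xs Ys Z)).symm f

/-- The covariant action `C̲(W₁,…,Wₘ; h)` of a unary morphism `h` on internal
homs, defined by `(1,…,1,C̲(Ws;h)) · ev_{Ws;B} = ev_{Ws;A} · h`. -/
noncomputable def homCovM (Ws : List C.Obj) {A B : C.Obj} (h : C.Hom [A] B) :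
    C.Hom [C.ihom Ws A] (C.ihom Ws B) :=
  C.curry (Xs := Ws) (C.toMulticategory.postcomp (C.ev Ws A) h)

/-- The contravariant action `C̲(h; Z)` of a unary morphism `h : A → B` on
internal homs, defined by `(1,C̲(h;Z)) · ev_{A;Z} = (h,1) · ev_{B;Z}`. -/
noncomputable def homContra {A B : C.Obj} (h : C.Hom [A] B) (Z : C.Obj) :
    C.Hom [C.ihom [B] Z] (C.ihom [A] Z) :=
  C.curry (Xs := [A]) (C.toMulticategory.plugFirst h (C.ev [B] Z))

/-- The contravariant action `C̲(f₁,…,fₘ; Z)` of a family of unary morphisms on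
internal homs. -/
noncomputable def homContraM {As Bs : List C.Obj}
    (fs : HomFam C.Obj C.Hom (As.map fun a => [a]) Bs) (Z : C.Obj) :
    C.Hom [C.ihom Bs Z] (C.ihom As Z) :=
  C.curry (Xs := As) (C.toMulticategory.sideComp fs (C.ev Bs Z))

/-- Composition `μ` of the `C`-category `C̲`, determined by
`(1_X, μ)·ev_{X;Z} = (ev_{X;Y},1)·ev_{Y;Z}`. -/
noncomputable def mu (X Y Z : C.Obj) :
    C.Hom [C.ihom [X] Y, C.ihom [Y] Z] (C.ihom [X] Z) :=
  C.curry (Xs := [X])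
    (C.toMulticategory.plugFirst (Xs := [X, C.ihom [X] Y]) (Γ := [C.ihom [Y] Z])
      (C.ev [X] Y) (C.ev [Y] Z))

/-- The identity `⟨1_X⟩ : () → C̲(X;X)` of the `C`-category `C̲`. -/
noncomputable def oneHom (X : C.Obj) : C.Hom [] (C.ihom [X] X) :=
  C.curry (Xs := [X]) (Ys := []) (C.ident X)

/-- The morphism `L^X_{YZ} : C̲(Y;Z) → C̲(C̲(X;Y);C̲(X;Z))`, uniquely determined
by `(1, L^X_{YZ}) · ev = μ`. -/
noncomputable def Lhat (X Y Z : C.Obj) :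
    C.Hom [C.ihom [Y] Z] (C.ihom [C.ihom [X] Y] (C.ihom [X] Z)) :=
  C.curry (Xs := [C.ihom [X] Y]) (C.mu X Y Z)

/-- The action `C̲(u;1) : C̲(1;X) → C̲(;X) = X` of a nullary morphism `u`. -/
def uAct {one : C.Obj} (u : C.Hom [] one) (X : C.Obj) :
    C.Hom [C.ihom [one] X] X :=
  C.toMulticategory.plugFirst u (C.ev [one] X)

/-- `(one, u)` is a unit object of the closed multicategory `C` if all the
morphisms `C̲(u;1) : C̲(1;X) → X` are invertible. -/
def IsUnitObj (one : C.Obj) (u : C.Hom [] one) : Prop :=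
  ∀ X : C.Obj, ∃ inv : C.Hom [X] (C.ihom [one] X),
    C.toMulticategory.comp1 (C.uAct u X) inv = C.ident (C.ihom [one] X) ∧
    C.toMulticategory.comp1 inv (C.uAct u X) = C.ident X

end ClosedMulticategory

/-- The closing transformation `F̲_{Xs;Z} : F C̲(Xs;Z) → D̲(F Xs; FZ)` of a
multifunctor between closed multicategories, i.e. the unique morphism with
`(1,…,1,F̲) · ev^D = F(ev^C)`. -/
noncomputable def closingTrans {C D : ClosedMulticategory.{u, v}}
    (F : Multifunctor C.toMulticategory D.toMulticategory)
    (Xs : List C.Obj) (Z : C.Obj) :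
    D.Hom [F.obj (C.ihom Xs Z)] (D.ihom (Xs.map F.obj) (F.obj Z)) :=
  D.curry (Xs := Xs.map F.obj)
    (cast (congrArg (D.Hom · (F.obj Z)) (@List.map_append _ _ F.obj Xs [C.ihom Xs Z]))
      (F.map (C.ev Xs Z)))

/-! Morphisms into an internal hom `C̲(Xs;Z)` are determined by their composite with `ev`
(`ihom_ext`). Composing the two functor laws of `L^X` with `ev` and using `(1, L)·ev = μ`
reduces them to the right unit law `(1, ⟨1⟩)·μ = 1` and the associativity
`(1, μ)·μ = (μ, 1)·μ` of `C̲`. Composing these in turn with `ev_X` and using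
`(1, μ)·ev = (ev, 1)·ev` twice, both sides become `ev`, resp. the iterated evaluation
`(ev, 1, 1)·(ev, 1)·ev`. The rest is associativity of the multicategory `C`; the step with
content is that plugging into the two arguments of a binary morphism commutes
(`plug_plugFirst_comm`). -/

theorem HomFam.cons_congr {Xs Xs' : List Obj} {Y : Obj} {Xss Xss' : List (List Obj)}
    {Ys Ys' : List Obj} {f : Hom Xs Y} {f' : Hom Xs' Y} {fs : HomFam Obj Hom Xss Ys}
    {fs' : HomFam Obj Hom Xss' Ys'} (hXs : Xs = Xs') (hXss : Xss = Xss') (hYs : Ys = Ys')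
    (hf : f ≍ f') (hfs : fs ≍ fs') : HomFam.cons f fs ≍ HomFam.cons f' fs' := by
  subst hXs hXss hYs
  cases eq_of_heq hf
  cases eq_of_heq hfs
  rfl

theorem appendFam_nil : ∀ {Xss Ys} (fs : HomFam Obj Hom Xss Ys), appendFam fs .nil ≍ fs
  | _, _, .nil => .rfl
  | _, _, .cons _ fs => HomFam.cons_congr rfl (by simp) (by simp) .rfl (appendFam_nil fs)

namespace Multicategory

variable {M : Multicategory.{u, v}}

theorem comp_congr {Xss Xss' : List (List M.Obj)} {Ys Ys' : List M.Obj} {Z : M.Obj}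
    {fs : HomFam M.Obj M.Hom Xss Ys} {fs' : HomFam M.Obj M.Hom Xss' Ys'}
    {g : M.Hom Ys Z} {g' : M.Hom Ys' Z} (hXss : Xss = Xss') (hYs : Ys = Ys')
    (hfs : fs ≍ fs') (hg : g ≍ g') : M.comp fs g ≍ M.comp fs' g' := by
  subst hXss hYs
  cases eq_of_heq hfs
  cases eq_of_heq hg
  rfl

theorem plug_comp {A H Z : M.Obj} {Xss : List (List M.Obj)} {Ys : List M.Obj}
    (fs : HomFam M.Obj M.Hom Xss Ys) (g : M.Hom Ys H) (h : M.Hom [A, H] Z) :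
    M.plug (Xs := [A]) (M.comp fs g) h
      = M.comp (.cons (M.ident A) fs) (M.plug (Xs := [A]) g h) := by
  have hassoc := M.assoc (.cons (.cons (M.ident A) .nil) (.cons fs .nil))
    (.cons (M.ident A) (.cons g .nil)) h
  refine eq_of_heq <| (cast_heq _ _).trans <| .trans ?_ <| hassoc.trans ?_
  · exact comp_congr rfl rfl (HomFam.cons_congr rfl rfl rfl (M.comp_id (M.ident A)).symm .rfl) .rfl
  · exact comp_congr (by simp) (by simp)
      (HomFam.cons_congr rfl (by simp) (by simp) .rfl (appendFam_nil fs)) (cast_heq _ _).symm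

theorem pair_eq_plug_plugFirst {As Bs : List M.Obj} {A B D : M.Obj} (a : M.Hom As A)
    (b : M.Hom Bs B) (h : M.Hom [A, B] D) : M.pair a b h = M.plug b (M.plugFirst a h) := by
  have hassoc := M.assoc (.cons (idFam M.ident As) (.cons (.cons b .nil) .nil))
    (.cons a (.cons (M.ident B) .nil)) h
  refine eq_of_heq <| (cast_heq _ _).trans <| .trans ?_ <| hassoc.trans (cast_heq _ _).symm
  exact comp_congr (by simp [map_singleton_flatten]) rfl
    (HomFam.cons_congr (by simp [map_singleton_flatten]) (by simp) rfl (M.id_comp a).symm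
      (HomFam.cons_congr (by simp) rfl rfl (M.comp_id b).symm .rfl)) .rfl

theorem pair_eq_plugFirst_plug {As Bs : List M.Obj} {A B D : M.Obj} (a : M.Hom As A)
    (b : M.Hom Bs B) (h : M.Hom [A, B] D) :
    M.pair a b h = M.plugFirst a (M.plug (Xs := [A]) b h) := by
  have hassoc := M.assoc (.cons (.cons a .nil) (.cons (idFam M.ident Bs) .nil))
    (.cons (M.ident A) (.cons b .nil)) h
  refine eq_of_heq <| (cast_heq _ _).trans <| .trans ?_ <|
    hassoc.trans <| .trans ?_ (cast_heq _ _).symm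
  · exact comp_congr (by simp [map_singleton_flatten]) rfl
      (HomFam.cons_congr (by simp) (by simp [map_singleton_flatten]) rfl (M.comp_id a).symm
        (HomFam.cons_congr (by simp [map_singleton_flatten]) rfl rfl (M.id_comp b).symm .rfl)) .rfl
  · exact comp_congr (by simp) (by simp)
      (HomFam.cons_congr rfl (by simp) (by simp) .rfl (appendFam_nil _)) (cast_heq _ _).symm

theorem plug_plugFirst_comm {As Bs : List M.Obj} {A B D : M.Obj} (a : M.Hom As A)
    (b : M.Hom Bs B) (h : M.Hom [A, B] D) :
    M.plug b (M.plugFirst a h) = M.plugFirst a (M.plug (Xs := [A]) b h) := by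
  rw [← pair_eq_plug_plugFirst, pair_eq_plugFirst_plug]

/-- Only heterogeneous because `(Xss ++ [Cs]).flatten = Xss.flatten ++ Cs` is not a
definitional equality for variable lists; at concrete lists it is used through `eq_of_heq`. -/
theorem pair_comp_left {Xss : List (List M.Obj)} {Ys Cs : List M.Obj} {E C D : M.Obj}
    (fs : HomFam M.Obj M.Hom Xss Ys) (e : M.Hom Ys E) (c : M.Hom Cs C) (h : M.Hom [E, C] D) :
    M.pair (M.comp fs e) c h ≍ M.comp (appendFam fs (.cons c .nil)) (M.plugFirst e h) := by
  have hassoc := M.assoc (.cons fs (.cons (.cons c .nil) .nil)) (.cons e (.cons (M.ident C) .nil)) h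
  refine (cast_heq _ _).trans (.trans ?_ hassoc)
  exact comp_congr (by simp) rfl (HomFam.cons_congr rfl (by simp) rfl .rfl
    (HomFam.cons_congr (by simp) rfl rfl (M.comp_id c).symm .rfl)) .rfl

end Multicategory

namespace ClosedMulticategory

open Multicategory

variable (C : ClosedMulticategory.{u, v})

theorem plug_curry {Xs Ys : List C.Obj} {Z : C.Obj} (f : C.Hom (Xs ++ Ys) Z) :
    C.plug (C.curry f) (C.ev Xs Z) = f :=
  (Equiv.ofBijective _ (C.closed Xs Ys Z)).apply_symm_apply f

variable {C} in
theorem ihom_ext {Xs Ys : List C.Obj} {Z : C.Obj} {f g : C.Hom Ys (C.ihom Xs Z)}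
    (h : C.plug f (C.ev Xs Z) = C.plug g (C.ev Xs Z)) : f = g :=
  (C.closed Xs Ys Z).injective h

theorem plug_oneHom (Y : C.Obj) : C.plug (C.oneHom Y) (C.ev [Y] Y) = C.ident Y :=
  C.plug_curry _

theorem plug_mu (X Y Z : C.Obj) :
    C.plug (C.mu X Y Z) (C.ev [X] Z) = C.plugFirst (C.ev [X] Y) (C.ev [Y] Z) :=
  C.plug_curry _

theorem plug_Lhat (X Y Z : C.Obj) :
    C.plug (C.Lhat X Y Z) (C.ev [C.ihom [X] Y] (C.ihom [X] Z)) = C.mu X Y Z :=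
  C.plug_curry _

theorem plug_oneHom_mu (X Y : C.Obj) :
    C.plug (Xs := [C.ihom [X] Y]) (C.oneHom Y) (C.mu X Y Y) = C.ident (C.ihom [X] Y) := by
  apply ihom_ext
  calc C.plug (C.plug (Xs := [C.ihom [X] Y]) (C.oneHom Y) (C.mu X Y Y)) (C.ev [X] Y)
      = C.comp (.cons (C.ident X) (.cons (C.ident (C.ihom [X] Y)) (.cons (C.oneHom Y) .nil)))
          (C.plug (C.mu X Y Y) (C.ev [X] Y)) :=
        plug_comp (.cons (C.ident _) (.cons (C.oneHom Y) .nil)) _ _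
    _ = C.plug (C.oneHom Y) (C.plugFirst (C.ev [X] Y) (C.ev [Y] Y)) := by rw [plug_mu]; rfl
    _ = C.plugFirst (C.ev [X] Y) (C.ident Y) := by
        rw [plug_plugFirst_comm, plug_oneHom]
    _ = C.ev [X] Y := eq_of_heq (C.comp_id _)
    _ = C.plug (C.ident (C.ihom [X] Y)) (C.ev [X] Y) := (eq_of_heq (C.id_comp _)).symm

theorem mu_assoc (X Y Z W : C.Obj) :
    C.plug (Xs := [C.ihom [X] Y]) (C.mu Y Z W) (C.mu X Y W)
      = C.plugFirst (C.mu X Y Z) (C.mu X Z W) := by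
  apply ihom_ext
  calc C.plug (C.plug (Xs := [C.ihom [X] Y]) (C.mu Y Z W) (C.mu X Y W)) (C.ev [X] W)
      = C.comp (.cons (C.ident X) (.cons (C.ident (C.ihom [X] Y)) (.cons (C.mu Y Z W) .nil)))
          (C.plug (C.mu X Y W) (C.ev [X] W)) :=
        plug_comp (.cons (C.ident _) (.cons (C.mu Y Z W) .nil)) _ _
    _ = C.plug (C.mu Y Z W) (C.plugFirst (C.ev [X] Y) (C.ev [Y] W)) := by rw [plug_mu]; rfl
    _ = C.plugFirst (C.ev [X] Y) (C.plugFirst (C.ev [Y] Z) (C.ev [Z] W)) := by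
        rw [plug_plugFirst_comm, plug_mu]
    _ = C.plugFirst (C.plugFirst (C.ev [X] Y) (C.ev [Y] Z)) (C.ev [Z] W) :=
        (eq_of_heq (pair_comp_left
          (.cons (C.ev [X] Y) (.cons (C.ident (C.ihom [Y] Z)) .nil)) _ _ _)).symm
    _ = C.comp (.cons (C.ident X) (.cons (C.mu X Y Z) (.cons (C.ident (C.ihom [Z] W)) .nil)))
          (C.plugFirst (C.ev [X] Z) (C.ev [Z] W)) := by
        rw [← plug_mu]
        exact eq_of_heq (pair_comp_left
          (.cons (C.ident X) (.cons (C.mu X Y Z) .nil)) _ _ _)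
    _ = C.plug (C.plugFirst (C.mu X Y Z) (C.mu X Z W)) (C.ev [X] W) := by
        rw [← plug_mu]
        exact (plug_comp (.cons (C.mu X Y Z) (.cons (C.ident _) .nil)) _ _).symm

theorem postcomp_oneHom_Lhat (X Y : C.Obj) :
    C.postcomp (C.oneHom Y) (C.Lhat X Y Y) = C.oneHom (C.ihom [X] Y) := by
  apply ihom_ext
  calc C.plug (C.postcomp (C.oneHom Y) (C.Lhat X Y Y)) (C.ev _ _)
      = C.plug (C.oneHom Y) (C.plug (C.Lhat X Y Y) (C.ev _ _)) :=
        plug_comp (.cons (C.oneHom Y) .nil) _ _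
    _ = C.ident (C.ihom [X] Y) := by rw [plug_Lhat, plug_oneHom_mu]
    _ = C.plug (C.oneHom (C.ihom [X] Y)) (C.ev _ _) := (C.plug_oneHom _).symm

theorem postcomp_mu_Lhat (X Y Z W : C.Obj) :
    C.postcomp (C.mu Y Z W) (C.Lhat X Y W)
      = C.pair (C.Lhat X Y Z) (C.Lhat X Z W)
          (C.mu (C.ihom [X] Y) (C.ihom [X] Z) (C.ihom [X] W)) := by
  apply ihom_ext
  calc C.plug (C.postcomp (C.mu Y Z W) (C.Lhat X Y W)) (C.ev _ _)
      = C.plug (C.mu Y Z W) (C.plug (C.Lhat X Y W) (C.ev _ _)) :=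
        plug_comp (.cons (C.mu Y Z W) .nil) _ _
    _ = C.pair (C.plug (C.Lhat X Y Z) (C.ev [C.ihom [X] Y] (C.ihom [X] Z))) (C.Lhat X Z W)
          (C.ev [C.ihom [X] Z] (C.ihom [X] W)) := by
        rw [plug_Lhat, mu_assoc, pair_eq_plugFirst_plug, plug_Lhat, plug_Lhat]
    _ = C.comp (.cons (C.ident _) (.cons (C.Lhat X Y Z) (.cons (C.Lhat X Z W) .nil)))
          (C.plugFirst (C.ev [C.ihom [X] Y] (C.ihom [X] Z))
            (C.ev [C.ihom [X] Z] (C.ihom [X] W))) :=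
        eq_of_heq (pair_comp_left
          (.cons (C.ident _) (.cons (C.Lhat X Y Z) .nil)) _ _ _)
    _ = C.plug (C.pair (C.Lhat X Y Z) (C.Lhat X Z W)
          (C.mu (C.ihom [X] Y) (C.ihom [X] Z) (C.ihom [X] W))) (C.ev _ _) := by
        rw [← plug_mu]
        exact (plug_comp (.cons (C.Lhat X Y Z) (.cons (C.Lhat X Z W) .nil)) _ _).symm

end ClosedMulticategory

open ClosedMulticategory in
/-- In a closed multicategory `C`, the assignment
`Y ↦ C̲(X;Y)` together with the morphisms
`L^X_{YZ} : C̲(Y;Z) → C̲(C̲(X;Y);C̲(X;Z))` (uniquely determined by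
`(1,L^X_{YZ})·ev = μ`) defines a `C`-functor `L^X : C̲ → C̲`: it preserves
identities and composition. -/
theorem Lhat_CFunctor (C : ClosedMulticategory.{u, v}) (X : C.Obj) :
    (∀ Y : C.Obj,
      C.toMulticategory.postcomp (C.oneHom Y) (C.Lhat X Y Y)
        = C.oneHom (C.ihom [X] Y)) ∧
    (∀ Y Z W : C.Obj,
      C.toMulticategory.postcomp (C.mu Y Z W) (C.Lhat X Y W)
        = C.toMulticategory.pair (C.Lhat X Y Z) (C.Lhat X Z W)
            (C.mu (C.ihom [X] Y) (C.ihom [X] Z) (C.ihom [X] W))) :=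
  ⟨C.postcomp_oneHom_Lhat X, C.postcomp_mu_Lhat X⟩
end
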